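/- Let Q = {P_1,…,P_l} be a measurement scheme that determines any pure state among all states, and set c := inf{ ‖M_Q(X)‖ : X ∈ K }, where K = {X ∈ H(d) : λ₂(X) ≤ 0, ‖X‖ = 1}. Then for every measurement scheme Q′ = {P′_1,…,P′_l} with the same outcome set satisfying ‖M_Q − M_{Q′}‖_∞ < c, the scheme Q′ determines any pure state among all states. -/

import Mathlib

open Matrix ComplexOrder

noncomputable def frobNorm {n m : Type*} [Fintype n] [Fintype m] {𝕜 : Type*} [RCLike 𝕜]
    (X : Matrix n m 𝕜) : ℝ :=
  Real.sqrt (∑ i, ∑ j, ‖X i j‖ ^ 2)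

def IsPOVM {d m : ℕ} (P : Fin m → Matrix (Fin d) (Fin d) ℂ) : Prop :=
  (∀ j, (P j).PosSemidef) ∧ (∑ j, P j) = 1

def IsMeasScheme {d l m : ℕ} (Q : Fin l → Fin m → Matrix (Fin d) (Fin d) ℂ) : Prop :=
  ∀ i, IsPOVM (Q i)

noncomputable def measMap {d l m : ℕ} (Q : Fin l → Fin m → Matrix (Fin d) (Fin d) ℂ)
    (X : Matrix (Fin d) (Fin d) ℂ) : Matrix (Fin l) (Fin m) ℝ :=
  Matrix.of fun i j => (Matrix.trace (X * Q i j)).re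

noncomputable def pureState {d : ℕ} (ψ : Fin d → ℂ) : Matrix (Fin d) (Fin d) ℂ :=
  Matrix.vecMulVec ψ (star ψ)

def IsState {d : ℕ} (ρ : Matrix (Fin d) (Fin d) ℂ) : Prop :=
  ρ.PosSemidef ∧ ρ.trace = 1

def DeterminesPure {d l m : ℕ} (Q : Fin l → Fin m → Matrix (Fin d) (Fin d) ℂ) : Prop :=
  ∀ ψ : Fin d → ℂ, (∑ k, Complex.normSq (ψ k)) = 1 →
    ∀ ρ : Matrix (Fin d) (Fin d) ℂ, IsState ρ →
      measMap Q (pureState ψ) = measMap Q ρ → ρ = pureState ψ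

noncomputable def posEigCount {d : ℕ} {X : Matrix (Fin d) (Fin d) ℂ} (hX : X.IsHermitian) : ℕ :=
  Nat.card {i : Fin d // 0 < hX.eigenvalues i}

def Kset (d : ℕ) : Set (Matrix (Fin d) (Fin d) ℂ) :=
  {X | ∃ hX : X.IsHermitian, posEigCount hX ≤ 1 ∧ frobNorm X = 1}

noncomputable def opNormHerm {d l m : ℕ}
    (T : Matrix (Fin d) (Fin d) ℂ → Matrix (Fin l) (Fin m) ℝ) : ℝ :=
  sSup {r : ℝ | ∃ X : Matrix (Fin d) (Fin d) ℂ, X.IsHermitian ∧ frobNorm X = 1 ∧ r = frobNorm (T X)}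

/-! If `M_{Q'}(|ψ⟩⟨ψ|) = M_{Q'}(ρ)` with `ρ ≠ |ψ⟩⟨ψ|`, then `X = |ψ⟩⟨ψ| - ρ` is a nonzero Hermitian
matrix whose quadratic form is `≤ 0` on `ψ^⊥`. Two eigenvectors with positive eigenvalues would
span a nonzero vector orthogonal to `ψ` on which the form is positive, so `X / ‖X‖ ∈ K`. As
`M_{Q'}(X) = 0`, we get `‖M_Q(X / ‖X‖)‖ = ‖(M_Q - M_{Q'})(X / ‖X‖)‖ ≤ ‖M_Q - M_{Q'}‖_∞ < c`,
contradicting the definition of `c`. -/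

open scoped Matrix.Norms.Frobenius

section

variable {n m 𝕜 : Type*} [Fintype n] [Fintype m] [RCLike 𝕜]

lemma frobNorm_eq_norm (X : Matrix n m 𝕜) : frobNorm X = ‖X‖ := by
  simp only [frobNorm, frobenius_norm_def, Real.sqrt_eq_rpow, Real.rpow_two]

lemma frobNorm_nonneg (X : Matrix n m 𝕜) : 0 ≤ frobNorm X := Real.sqrt_nonneg _

lemma frobNorm_mono {A B : Matrix n m 𝕜} (h : ∀ i j, ‖A i j‖ ≤ ‖B i j‖) :
    frobNorm A ≤ frobNorm B :=
  Real.sqrt_le_sqrt (by gcongr with i _ j _; exact h i j)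

lemma norm_apply_le_frobNorm (X : Matrix n m 𝕜) (i : n) (j : m) : ‖X i j‖ ≤ frobNorm X :=
  calc ‖X i j‖ = √(‖X i j‖ ^ 2) := (Real.sqrt_sq (norm_nonneg _)).symm
    _ ≤ frobNorm X := Real.sqrt_le_sqrt <|
        (Finset.single_le_sum (f := fun j => ‖X i j‖ ^ 2) (fun _ _ => by positivity)
          (Finset.mem_univ j)).trans
        (Finset.single_le_sum (f := fun i => ∑ j, ‖X i j‖ ^ 2) (fun _ _ => by positivity)
          (Finset.mem_univ i))

lemma norm_trace_mul_le {X R : Matrix n n 𝕜} (hX : ∀ a b, ‖X a b‖ ≤ 1) :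
    ‖trace (X * R)‖ ≤ ∑ a, ∑ b, ‖R a b‖ :=
  calc ‖trace (X * R)‖ = ‖∑ a, ∑ b, X a b * R b a‖ := by simp [trace, mul_apply]
    _ ≤ ∑ a, ∑ b, ‖X a b * R b a‖ :=
        (norm_sum_le _ _).trans (Finset.sum_le_sum fun a _ => norm_sum_le _ _)
    _ ≤ ∑ a, ∑ b, ‖R b a‖ := by
        gcongr with a _ b _
        rw [norm_mul]
        exact mul_le_of_le_one_left (norm_nonneg _) (hX a b)
    _ = ∑ a, ∑ b, ‖R a b‖ := Finset.sum_comm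

end

lemma exists_ne_zero_mul_add_mul_eq_zero {R : Type*} [CommRing R] [Nontrivial R] (a b : R) :
    ∃ c₁ c₂ : R, (c₁ ≠ 0 ∨ c₂ ≠ 0) ∧ c₁ * a + c₂ * b = 0 := by
  by_cases hb : b = 0
  · exact ⟨0, 1, Or.inr one_ne_zero, by simp [hb]⟩
  · exact ⟨b, -a, Or.inl hb, by ring⟩

namespace Matrix.IsHermitian

variable {n : Type*} [Fintype n] [DecidableEq n] {Y : Matrix n n ℂ}

lemma star_eigenvectorBasis_dotProduct (hY : Y.IsHermitian) (i j : n) :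
    star ⇑(hY.eigenvectorBasis i) ⬝ᵥ ⇑(hY.eigenvectorBasis j) = if i = j then 1 else 0 := by
  rw [dotProduct_comm, ← EuclideanSpace.inner_eq_star_dotProduct,
    orthonormal_iff_ite.mp hY.eigenvectorBasis.orthonormal]

lemma star_dotProduct_mulVec_eigenvectorBasis_pair (hY : Y.IsHermitian) {i j : n} (hij : i ≠ j)
    (a b : ℂ) :
    let v := a • ⇑(hY.eigenvectorBasis i) + b • ⇑(hY.eigenvectorBasis j)
    star v ⬝ᵥ (Y *ᵥ v) =
      ((Complex.normSq a * hY.eigenvalues i + Complex.normSq b * hY.eigenvalues j : ℝ) : ℂ) := by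
  simp only [mulVec_add, mulVec_smul, hY.mulVec_eigenvectorBasis, star_add, star_smul,
    add_dotProduct, dotProduct_add, smul_dotProduct, dotProduct_smul,
    hY.star_eigenvectorBasis_dotProduct, if_neg hij, if_neg hij.symm, ↓reduceIte]
  simp only [Complex.real_smul, smul_eq_mul, Complex.ofReal_add, Complex.ofReal_mul,
    ← Complex.mul_conj, Complex.star_def]
  ring

end Matrix.IsHermitian

lemma posEigCount_le_one_of_nonpos_on_orthogonal {d : ℕ} {Y : Matrix (Fin d) (Fin d) ℂ}
    (hY : Y.IsHermitian) (ψ : Fin d → ℂ)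
    (h : ∀ v : Fin d → ℂ, star ψ ⬝ᵥ v = 0 → star v ⬝ᵥ (Y *ᵥ v) ≤ 0) :
    posEigCount hY ≤ 1 := by
  by_contra! hc
  rw [posEigCount, Nat.card_eq_fintype_card, Fintype.one_lt_card_iff] at hc
  obtain ⟨⟨i, hi⟩, ⟨j, hj⟩, hne⟩ := hc
  have hij : i ≠ j := fun h => hne (Subtype.ext h)
  set u := fun k => ⇑(hY.eigenvectorBasis k)
  obtain ⟨c₁, c₂, hc, horth⟩ :=
    exists_ne_zero_mul_add_mul_eq_zero (star ψ ⬝ᵥ u i) (star ψ ⬝ᵥ u j)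
  have hv : star ψ ⬝ᵥ (c₁ • u i + c₂ • u j) = 0 := by
    rw [dotProduct_add, dotProduct_smul, dotProduct_smul, smul_eq_mul, smul_eq_mul, ← horth]
  have hpos : 0 < Complex.normSq c₁ * hY.eigenvalues i + Complex.normSq c₂ * hY.eigenvalues j := by
    rcases hc with hc | hc
    · exact add_pos_of_pos_of_nonneg (mul_pos (Complex.normSq_pos.mpr hc) hi)
        (mul_nonneg (Complex.normSq_nonneg _) hj.le)
    · exact add_pos_of_nonneg_of_pos (mul_nonneg (Complex.normSq_nonneg _) hi.le)
        (mul_pos (Complex.normSq_pos.mpr hc) hj)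
  have hle := h _ hv
  rw [hY.star_dotProduct_mulVec_eigenvectorBasis_pair hij, ← Complex.ofReal_zero,
    Complex.real_le_real] at hle
  linarith

lemma inv_frobNorm_smul_mem_Kset {d : ℕ} {X : Matrix (Fin d) (Fin d) ℂ} (hX : X.IsHermitian)
    (hX0 : X ≠ 0) (ψ : Fin d → ℂ)
    (h : ∀ v : Fin d → ℂ, star ψ ⬝ᵥ v = 0 → star v ⬝ᵥ (X *ᵥ v) ≤ 0) :
    (frobNorm X)⁻¹ • X ∈ Kset d := by
  have hnorm : 0 < frobNorm X := by rwa [frobNorm_eq_norm, norm_pos_iff]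
  have hr : 0 ≤ (((frobNorm X)⁻¹ : ℝ) : ℂ) := by exact_mod_cast (inv_pos.mpr hnorm).le
  have hY : ((frobNorm X)⁻¹ • X).IsHermitian := hX.smul (IsSelfAdjoint.all _)
  refine ⟨hY, posEigCount_le_one_of_nonpos_on_orthogonal hY ψ fun v hv => ?_, ?_⟩
  · rw [smul_mulVec, dotProduct_smul, Complex.real_smul]
    exact mul_nonpos_of_nonneg_of_nonpos hr (h v hv)
  · rw [frobNorm_eq_norm, norm_smul, ← frobNorm_eq_norm,
      Real.norm_of_nonneg (inv_pos.mpr hnorm).le, inv_mul_cancel₀ hnorm.ne']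

lemma star_dotProduct_mulVec_pureState_sub_nonpos {d : ℕ} (ψ : Fin d → ℂ)
    {ρ : Matrix (Fin d) (Fin d) ℂ} (hρ : ρ.PosSemidef) {v : Fin d → ℂ} (hv : star ψ ⬝ᵥ v = 0) :
    star v ⬝ᵥ ((pureState ψ - ρ) *ᵥ v) ≤ 0 := by
  rw [sub_mulVec, pureState, vecMulVec_mulVec, hv, MulOpposite.op_zero, zero_smul, zero_sub,
    dotProduct_neg, neg_nonpos]
  exact hρ.dotProduct_mulVec_nonneg v

section measMap

variable {d l m : ℕ}

lemma measMap_sub (Q : Fin l → Fin m → Matrix (Fin d) (Fin d) ℂ)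
    (A B : Matrix (Fin d) (Fin d) ℂ) : measMap Q (A - B) = measMap Q A - measMap Q B := by
  ext i j
  simp [measMap, sub_mul, trace_sub]

lemma measMap_smul (Q : Fin l → Fin m → Matrix (Fin d) (Fin d) ℂ) (r : ℝ)
    (X : Matrix (Fin d) (Fin d) ℂ) : measMap Q (r • X) = r • measMap Q X := by
  ext i j
  simp [measMap, trace_smul]

lemma measMap_sub_left (Q Q' : Fin l → Fin m → Matrix (Fin d) (Fin d) ℂ)
    (X : Matrix (Fin d) (Fin d) ℂ) : measMap (Q - Q') X = measMap Q X - measMap Q' X := by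
  ext i j
  simp [measMap, mul_sub, trace_sub]

lemma bddAbove_frobNorm_measMap (R : Fin l → Fin m → Matrix (Fin d) (Fin d) ℂ) :
    BddAbove {r : ℝ | ∃ X : Matrix (Fin d) (Fin d) ℂ, X.IsHermitian ∧ frobNorm X = 1 ∧
      r = frobNorm (measMap R X)} := by
  refine ⟨frobNorm (of fun i j => ∑ a, ∑ b, ‖R i j a b‖), ?_⟩
  rintro _ ⟨X, -, hX, rfl⟩
  refine frobNorm_mono fun i j => ?_
  have hXab : ∀ a b, ‖X a b‖ ≤ 1 := fun a b => hX ▸ norm_apply_le_frobNorm X a b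
  calc ‖measMap R X i j‖ ≤ ‖trace (X * R i j)‖ := Complex.abs_re_le_norm _
    _ ≤ ∑ a, ∑ b, ‖R i j a b‖ := norm_trace_mul_le hXab
    _ ≤ ‖(of fun i j => ∑ a, ∑ b, ‖R i j a b‖) i j‖ := le_abs_self _

lemma frobNorm_measMap_sub_le_opNormHerm (Q Q' : Fin l → Fin m → Matrix (Fin d) (Fin d) ℂ)
    {X : Matrix (Fin d) (Fin d) ℂ} (hX : X.IsHermitian) (hX1 : frobNorm X = 1) :
    frobNorm (measMap Q X - measMap Q' X) ≤ opNormHerm (fun X => measMap Q X - measMap Q' X) :=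
  le_csSup (by simpa only [measMap_sub_left] using bddAbove_frobNorm_measMap (Q - Q'))
    ⟨X, hX, hX1, rfl⟩

end measMap

theorem stmt7_general {d l m : ℕ}
    (Q : Fin l → Fin m → Matrix (Fin d) (Fin d) ℂ) :
    ∀ Q' : Fin l → Fin m → Matrix (Fin d) (Fin d) ℂ, IsMeasScheme Q' →
      opNormHerm (fun X => measMap Q X - measMap Q' X) <
        sInf {r : ℝ | ∃ X ∈ Kset d, r = frobNorm (measMap Q X)} →
      DeterminesPure Q' := by
  intro Q' _ hlt ψ _ ρ hρ heq
  by_contra hne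
  set X := pureState ψ - ρ
  have hX : X.IsHermitian := (posSemidef_vecMulVec_self_star ψ).isHermitian.sub hρ.1.isHermitian
  have hX0 : X ≠ 0 := sub_ne_zero.mpr (Ne.symm hne)
  set Y := (frobNorm X)⁻¹ • X
  have hYK : Y ∈ Kset d := inv_frobNorm_smul_mem_Kset hX hX0 ψ fun v hv =>
    star_dotProduct_mulVec_pureState_sub_nonpos ψ hρ.1 hv
  have hQ'Y : measMap Q' Y = 0 := by
    rw [measMap_smul, measMap_sub, heq, sub_self, smul_zero]
  have hlower :
      sInf {r : ℝ | ∃ X ∈ Kset d, r = frobNorm (measMap Q X)} ≤ frobNorm (measMap Q Y) :=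
    csInf_le ⟨0, by rintro _ ⟨Z, -, rfl⟩; exact frobNorm_nonneg _⟩ ⟨Y, hYK, rfl⟩
  obtain ⟨hYh, -, hY1⟩ := hYK
  have hupper : frobNorm (measMap Q Y) ≤ opNormHerm (fun X => measMap Q X - measMap Q' X) := by
    simpa only [hQ'Y, sub_zero] using frobNorm_measMap_sub_le_opNormHerm Q Q' hYh hY1
  linarith

theorem stmt7 {d l m : ℕ}
    (Q : Fin l → Fin m → Matrix (Fin d) (Fin d) ℂ) (hQ : IsMeasScheme Q)
    (hdet : DeterminesPure Q) :
    ∀ Q' : Fin l → Fin m → Matrix (Fin d) (Fin d) ℂ, IsMeasScheme Q' →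
      opNormHerm (fun X => measMap Q X - measMap Q' X) <
        sInf {r : ℝ | ∃ X ∈ Kset d, r = frobNorm (measMap Q X)} →
      DeterminesPure Q' :=
  stmt7_general Q
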